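/- arXiv:1603.02204 — 2 statements merged into one kernel-verified Lean document; each statement's English description precedes it below -/
import Mathlib

section
/- Let 𝓡 = 𝓡(F,L) be an ELT algebra with F a totally ordered abelian group and L a commutative ring with unit. If B ∈ 𝓡̄^{n×n} is left invertible (there exists A ∈ 𝓡̄^{n×n} with AB = Iₙ), then B is a generalized permutation matrix: there exist a permutation σ ∈ Sₙ and multiplicatively invertible elements c₁,…,cₙ ∈ 𝓡 such that the j-th column of B equals cⱼ·e_{σ(j)} (the entry in row σ(j) is cⱼ and all other entries of that column are −∞). -/
/-- The ELT algebra `𝓡(F, L)` together with an adjoined `−∞` element: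
`bot` represents `−∞`, and `elt a ℓ` represents the element `[ℓ]a`
with tangible value `a ∈ F` and layer `ℓ ∈ L`.  Thus `ELT F L` plays the
role of `𝓡̄ = 𝓡 ∪ {−∞}`. -/
inductive ELT (F : Type) (L : Type) : Type
  | bot : ELT F L
  | elt : F → L → ELT F L

namespace ELT

variable {F : Type} {L : Type}

/-- The sorting map `s : 𝓡̄ → L`, with `s (−∞) = 0`. -/
def s [Zero L] : ELT F L → L
  | bot => 0
  | elt _ ℓ => ℓ

/-- The tangible value `t : 𝓡̄ → F ∪ {−∞}`, with `t (−∞) = −∞ = ⊥`. -/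
def t : ELT F L → WithBot F
  | bot => ⊥
  | elt a _ => (a : WithBot F)

/-- `−∞` is the additive identity of `𝓡̄`, so we register it as the zero. -/
instance : Zero (ELT F L) := ⟨bot⟩

/-- The multiplicative identity `[1]0`. -/
instance [Zero F] [One L] : One (ELT F L) := ⟨elt 0 1⟩

/-- Addition on `𝓡̄`: the element with larger tangible value wins, and layers
add in case of a tie; `−∞` is neutral. -/
instance [LinearOrder F] [Add L] : Add (ELT F L) where
  add x y :=
    match x, y with
    | bot, y => y
    | x, bot => x
    | elt a ℓ, elt b k => if a < b then elt b k else if b < a then elt a ℓ else elt a (ℓ + k)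

/-- Multiplication on `𝓡̄`: tangible values add, layers multiply; `−∞` is absorbing. -/
instance [Add F] [Mul L] : Mul (ELT F L) where
  mul x y :=
    match x, y with
    | bot, _ => bot
    | _, bot => bot
    | elt a ℓ, elt b k => elt (a + b) (ℓ * k)

/-- The surpassing relation `x ⊨ y` on `𝓡̄`: `x = y + z` for some zero-layered `z`. -/
def Surpass [LinearOrder F] [Add L] [Zero L] (x y : ELT F L) : Prop :=
  ∃ z : ELT F L, s z = 0 ∧ x = y + z

/-- `x ∈ 𝓡^× ∪ {−∞}`: either `x = −∞` or `x` has nonzero layer. -/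
def TangibleOrBot [Zero L] (x : ELT F L) : Prop :=
  x = bot ∨ s x ≠ 0

/-- The sum of a finite family of elements of `𝓡̄`. -/
def fsum [LinearOrder F] [Add L] {m : ℕ} (f : Fin m → ELT F L) : ELT F L :=
  (List.ofFn f).sum

/-- A finite family of vectors in `𝓡̄ⁿ` is linearly dependent if there are
coefficients in `𝓡^× ∪ {−∞}`, not all `−∞`, such that the corresponding linear
combination is zero-layered in every coordinate (equivalently, some subfamily
admits a combination with all coefficients in `𝓡^×` which is zero-layered
everywhere). -/
def LinDep [LinearOrder F] [Zero L] [Add L] [Add F] [Mul L] {m n : ℕ}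
    (v : Fin m → Fin n → ELT F L) : Prop :=
  ∃ a : Fin m → ELT F L, (∀ i, TangibleOrBot (a i)) ∧ (∃ i, a i ≠ bot) ∧
    ∀ j : Fin n, s (fsum fun i => a i * v i j) = 0

/-- The ELT determinant of a square ELT matrix. -/
noncomputable def det {n : ℕ} [LinearOrder F] [Add F] [Zero F] [Ring L]
    (A : Matrix (Fin n) (Fin n) (ELT F L)) : ELT F L :=
  ((Finset.univ : Finset (Equiv.Perm (Fin n))).toList.map fun σ =>
    elt 0 (((Equiv.Perm.sign σ : ℤˣ) : ℤ) : L) * (List.ofFn fun i => A i (σ i)).prod).sum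

/-- The EL tropicalization of a Hahn (generalized Puiseux) series: `0 ↦ −∞`,
and a nonzero series with leading monomial `ℓ tᵃ` goes to `[ℓ](−a)`. -/
noncomputable def ELTrop [AddCommGroup F] [LinearOrder F] [IsOrderedAddMonoid F] [Zero L] (x : HahnSeries F L) : ELT F L :=
  open scoped Classical in
  if x = 0 then bot else elt (-x.order) (x.coeff x.order)

end ELT

namespace ELT

/-- Matrix multiplication over `𝓡̄`. -/
def matMul {F L : Type} [LinearOrder F] [Add F] [Add L] [Mul L] {n : ℕ}
    (A B : Matrix (Fin n) (Fin n) (ELT F L)) : Matrix (Fin n) (Fin n) (ELT F L) :=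
  fun i j => fsum fun k => A i k * B k j

/-- The identity ELT matrix: `[1]0` on the diagonal and `−∞` off it. -/
def idMat {F L : Type} [Zero F] [One L] {n : ℕ} : Matrix (Fin n) (Fin n) (ELT F L) :=
  fun i j => if i = j then elt 0 1 else bot

end ELT

/-! Over `𝓡̄` no cancellation can produce `−∞`: a finite sum is `−∞` only if every summand is,
and a product only if a factor is. Hence if `AB = I`, then for each `i` some `k = τ i` has
`A i k ≠ −∞` and `B k i ≠ −∞`, and the vanishing of `(AB) i j` for `j ≠ i` forces row `τ i` of `B`
to be `−∞` outside column `i`. This makes `τ` injective, hence a permutation, so column `j` of `B`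
is supported at `τ j` alone, where `A j (τ j) * B (τ j) j = [1]0` exhibits the inverse. -/

namespace ELT

variable {F L : Type}

section Arithmetic

lemma mul_eq_bot_iff [Add F] [Mul L] {x y : ELT F L} : x * y = bot ↔ x = bot ∨ y = bot := by
  cases x <;> cases y <;> simp [HMul.hMul, Mul.mul]

protected lemma mul_comm [AddCommMagma F] [CommMagma L] (x y : ELT F L) : x * y = y * x := by
  cases x with
  | bot => cases y <;> rfl
  | elt a ℓ =>
    cases y with
    | bot => rfl
    | elt b k => exact congrArg₂ elt (add_comm a b) (mul_comm ℓ k)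

variable [LinearOrder F] [Add L]

protected lemma bot_add (x : ELT F L) : bot + x = x := by
  cases x <;> rfl

protected lemma add_bot (x : ELT F L) : x + bot = x := by
  cases x <;> rfl

lemma add_eq_bot_iff {x y : ELT F L} : x + y = bot ↔ x = bot ∧ y = bot := by
  cases x <;> cases y <;> simp [HAdd.hAdd, Add.add]
  split_ifs <;> simp

lemma list_sum_eq_bot_iff {l : List (ELT F L)} : l.sum = bot ↔ ∀ x ∈ l, x = bot := by
  induction l with
  | nil => exact iff_of_true rfl (by simp)
  | cons a l ih => rw [List.sum_cons, add_eq_bot_iff, ih, List.forall_mem_cons]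

lemma fsum_eq_bot_iff {m : ℕ} {f : Fin m → ELT F L} : fsum f = bot ↔ ∀ i, f i = bot := by
  rw [fsum, list_sum_eq_bot_iff, List.forall_mem_ofFn_iff]

lemma fsum_succ {m : ℕ} (f : Fin (m + 1) → ELT F L) :
    fsum f = f 0 + fsum (fun i => f i.succ) := by
  simp [fsum, List.ofFn_succ]

lemma fsum_eq_single {m : ℕ} {f : Fin m → ELT F L} (k : Fin m)
    (h : ∀ i, i ≠ k → f i = bot) : fsum f = f k := by
  induction m with
  | zero => exact k.elim0
  | succ m ih =>
    rw [fsum_succ]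
    rcases Fin.eq_zero_or_eq_succ k with rfl | ⟨k, rfl⟩
    · rw [fsum_eq_bot_iff.mpr fun i => h i.succ (Fin.succ_ne_zero i), ELT.add_bot]
    · rw [h 0 (Fin.succ_ne_zero k).symm, ELT.bot_add]
      exact ih k fun i hi => h i.succ (Fin.succ_injective _ |>.ne hi)

end Arithmetic

section LeftInverse

variable [LinearOrder F] [Add F] [Zero F] [Add L] [Mul L] [One L] {n : ℕ}
  {A B : Matrix (Fin n) (Fin n) (ELT F L)}

lemma exists_ne_bot_of_matMul_eq_idMat (hAB : matMul A B = idMat) (i : Fin n) :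
    ∃ k, A i k ≠ bot ∧ B k i ≠ bot := by
  by_contra! hc
  have hsum : matMul A B i i = bot :=
    fsum_eq_bot_iff.mpr fun k => mul_eq_bot_iff.mpr ((em (A i k = bot)).imp_right (hc k))
  simp [hAB, idMat] at hsum

lemma eq_bot_of_matMul_eq_idMat (hAB : matMul A B = idMat) {i j k : Fin n}
    (hA : A i k ≠ bot) (hji : j ≠ i) : B k j = bot := by
  have hsum : matMul A B i j = bot := by simp [hAB, idMat, hji.symm]
  exact (mul_eq_bot_iff.mp (fsum_eq_bot_iff.mp hsum k)).resolve_left hA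

theorem exists_perm_of_matMul_eq_idMat (hAB : matMul A B = idMat) :
    ∃ σ : Equiv.Perm (Fin n), (∀ j, A j (σ j) * B (σ j) j = elt 0 1) ∧
      ∀ i j, i ≠ σ j → B i j = bot := by
  choose τ hτA hτB using exists_ne_bot_of_matMul_eq_idMat hAB
  have hτ : Function.Injective τ := fun i i' hττ => by
    by_contra hne
    exact hτB i' (hττ ▸ eq_bot_of_matMul_eq_idMat hAB (hτA i) (Ne.symm hne))
  let σ := Equiv.ofBijective τ (Finite.injective_iff_bijective.mp hτ)
  have hcol : ∀ i j, i ≠ σ j → B i j = bot := fun i j hi => by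
    obtain ⟨i, rfl⟩ := σ.surjective i
    exact eq_bot_of_matMul_eq_idMat hAB (hτA i) fun hji => hi (hji ▸ rfl)
  refine ⟨σ, fun j => ?_, hcol⟩
  have hdiag := congrFun (congrFun hAB j) j
  rwa [idMat, if_pos rfl, matMul,
    fsum_eq_single (σ j) fun k hk => mul_eq_bot_iff.mpr (.inr (hcol k j hk))] at hdiag

end LeftInverse

end ELT

theorem stmt8_general {F L : Type} [AddCommGroup F] [LinearOrder F] [CommRing L] {n : ℕ}
    (B : Matrix (Fin n) (Fin n) (ELT F L))
    (h : ∃ A : Matrix (Fin n) (Fin n) (ELT F L), ELT.matMul A B = ELT.idMat) :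
    ∃ (σ : Equiv.Perm (Fin n)) (c : Fin n → ELT F L),
      (∀ j, ∃ d : ELT F L, c j * d = ELT.elt 0 1 ∧ d * c j = ELT.elt 0 1) ∧
      ∀ i j, B i j = if i = σ j then c j else ELT.bot := by
  obtain ⟨A, hAB⟩ := h
  obtain ⟨σ, hdiag, hcol⟩ := ELT.exists_perm_of_matMul_eq_idMat hAB
  refine ⟨σ, fun j => B (σ j) j, fun j => ⟨A j (σ j), ?_, hdiag j⟩, fun i j => ?_⟩
  · rw [ELT.mul_comm, hdiag j]
  · split_ifs with hij
    · rw [hij]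
    · exact hcol i j hij

/-- A left invertible matrix over `𝓡̄` is a generalized permutation matrix:
the `j`-th column is `cⱼ ⋅ e_{σ(j)}` for some invertible `cⱼ ∈ 𝓡` and `σ ∈ Sₙ`. -/
theorem stmt8 {F L : Type} [AddCommGroup F] [LinearOrder F] [IsOrderedAddMonoid F] [CommRing L] {n : ℕ}
    (B : Matrix (Fin n) (Fin n) (ELT F L))
    (h : ∃ A : Matrix (Fin n) (Fin n) (ELT F L), ELT.matMul A B = ELT.idMat) :
    ∃ (σ : Equiv.Perm (Fin n)) (c : Fin n → ELT F L),
      (∀ j, ∃ d : ELT F L, c j * d = ELT.elt 0 1 ∧ d * c j = ELT.elt 0 1) ∧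
      ∀ i j, B i j = if i = σ j then c j else ELT.bot :=
  stmt8_general B h
end

section
/- Let 𝓡 = 𝓡(ℝ,𝔽) with 𝔽 an algebraically closed field. Any n + 1 vectors in 𝓡̄ⁿ are linearly dependent. -/
/-! Lift each entry `[ℓ]a` to the monomial `ℓ t^(-a)` (`HahnSeries.single (-a) ℓ`) in the
Hahn series ring over `L` with exponents in `F`. There, more than `n` vectors of length `n`
satisfy a nontrivial relation `∑ cᵢ wᵢ = 0`, since a nontrivial commutative ring has the strong
rank condition. The tropicalized coefficients `ELTrop cᵢ` witness the ELT dependence: in each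
coordinate, the top tangible value `g` of `∑ ELTrop cᵢ * vᵢⱼ` only collects leading terms, so
its layer is the coefficient of `t^(-g)` in `∑ cᵢ wᵢⱼ = 0`. -/

namespace ELT

variable {F L : Type}

@[simp]
lemma t_elt (a : F) (ℓ : L) : t (elt a ℓ) = a := rfl

@[simp]
lemma elt_mul_elt [Add F] [Mul L] (a b : F) (ℓ k : L) : elt a ℓ * elt b k = elt (a + b) (ℓ * k) :=
  rfl

@[simp]
protected lemma mul_bot [Add F] [Mul L] (x : ELT F L) : x * bot = bot := by
  cases x <;> rfl

section Order

variable [LinearOrder F] [AddCommMonoid L]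

lemma t_add (x y : ELT F L) : t (x + y) = max (t x) (t y) := by
  rcases x with _ | ⟨a, ℓ⟩ <;> rcases y with _ | ⟨b, k⟩
  · simp [t]
  · simp [t]
  · simp [t]
  · show t (if a < b then _ else _) = _
    rcases lt_trichotomy a b with h | rfl | h
    · simp [t, h, h.le]
    · simp [t]
    · simp [t, h.not_gt, h, h.le]

lemma t_le_t_sum {l : List (ELT F L)} {x : ELT F L} (hx : x ∈ l) : t x ≤ t l.sum := by
  induction l with
  | nil => simp at hx
  | cons y l ih =>
    rw [List.sum_cons, t_add]
    rcases List.mem_cons.mp hx with rfl | hx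
    · exact le_max_left _ _
    · exact (ih hx).trans (le_max_right _ _)

end Order

section Monomial

variable [AddCommGroup F] [LinearOrder F] [AddCommMonoid L]

noncomputable def monomial : ELT F L → HahnSeries F L
  | bot => 0
  | elt a ℓ => HahnSeries.single (-a) ℓ

lemma coeff_monomial_elt (a g : F) (ℓ : L) :
    (monomial (elt a ℓ)).coeff (-g) = if a = g then ℓ else 0 := by
  simp [monomial, HahnSeries.coeff_single, eq_comm]

lemma coeff_monomial_add {x y : ELT F L} {g : F} (hx : t x ≤ g) (hy : t y ≤ g) :
    (monomial (x + y)).coeff (-g) = (monomial x).coeff (-g) + (monomial y).coeff (-g) := by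
  rcases x with _ | ⟨a, ℓ⟩ <;> rcases y with _ | ⟨b, k⟩
  · simp [monomial]
  · simp [monomial]
  · simp [monomial]
  · have ha : a ≤ g := WithBot.coe_le_coe.mp hx
    have hb : b ≤ g := WithBot.coe_le_coe.mp hy
    show (monomial (if a < b then _ else _)).coeff (-g) = _
    rcases lt_trichotomy a b with h | rfl | h
    · simp [coeff_monomial_elt, h, (h.trans_le hb).ne]
    · simp only [lt_irrefl, if_false, coeff_monomial_elt]
      split_ifs <;> simp
    · simp [coeff_monomial_elt, h, h.not_gt, (h.trans_le ha).ne]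

lemma coeff_monomial_sum {l : List (ELT F L)} {g : F} (h : t l.sum ≤ g) :
    (monomial l.sum).coeff (-g) = (l.map fun x => (monomial x).coeff (-g)).sum := by
  induction l with
  | nil => simp [monomial]
  | cons x l ih =>
    rw [List.sum_cons, t_add, max_le_iff] at h
    rw [List.sum_cons, coeff_monomial_add h.1 h.2, List.map_cons, List.sum_cons, ih h.2]

/-- The hypothesis `hf` says that `f i` is the leading term of `y i`, up to a zero layer. -/
lemma s_fsum_eq_zero_of_coeff_eq {m : ℕ} (f : Fin m → ELT F L) (y : Fin m → HahnSeries F L)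
    (hf : ∀ i (g : F), t (f i) ≤ g → (monomial (f i)).coeff (-g) = (y i).coeff (-g))
    (hy : ∑ i, y i = 0) : s (fsum f) = 0 := by
  rcases hS : fsum f with _ | ⟨g, ℓ⟩
  · rfl
  · have hsum : (List.ofFn f).sum = elt g ℓ := hS
    have hle : ∀ i, t (f i) ≤ g := fun i => by
      simpa [hsum] using t_le_t_sum (List.mem_ofFn.mpr ⟨i, rfl⟩ : f i ∈ List.ofFn f)
    show ℓ = 0
    calc ℓ = (monomial (fsum f)).coeff (-g) := by simp [hS, coeff_monomial_elt]
      _ = ∑ i, (monomial (f i)).coeff (-g) := by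
        rw [fsum, coeff_monomial_sum (hsum ▸ le_rfl), List.map_ofFn, List.sum_ofFn]
        rfl
      _ = ∑ i, (y i).coeff (-g) := Finset.sum_congr rfl fun i _ => hf i g (hle i)
      _ = 0 := by rw [← HahnSeries.coeff_sum, hy, HahnSeries.coeff_zero]

end Monomial

section Tropicalization

variable [AddCommGroup F] [LinearOrder F] [IsOrderedAddMonoid F]

lemma ELTrop_ne_bot [Zero L] {c : HahnSeries F L} (hc : c ≠ 0) : ELTrop c ≠ bot := by
  simp [ELTrop, hc]

lemma tangibleOrBot_ELTrop [Zero L] (c : HahnSeries F L) : TangibleOrBot (ELTrop c) := by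
  by_cases hc : c = 0 <;> simp [TangibleOrBot, ELTrop, hc, s]

lemma coeff_ELTrop_mul_monomial [Semiring L] (c : HahnSeries F L) (x : ELT F L) (g : F)
    (hg : t (ELTrop c * x) ≤ g) :
    (monomial (ELTrop c * x)).coeff (-g) = (c * monomial x).coeff (-g) := by
  rcases eq_or_ne c 0 with rfl | hc
  · simp [ELTrop, monomial]
  rcases x with _ | ⟨b, ℓ⟩
  · simp [monomial]
  have hcoeff : (c * monomial (elt b ℓ)).coeff (-g) = c.coeff (-g + b) * ℓ := by
    simpa [monomial] using HahnSeries.coeff_mul_single_add (x := c) (r := ℓ) (a := -g + b) (b := -b)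
  rw [show ELTrop c = elt (-c.order) (c.coeff c.order) from if_neg hc, elt_mul_elt] at hg ⊢
  rw [coeff_monomial_elt, hcoeff]
  rcases (WithBot.coe_le_coe.mp hg).lt_or_eq with hlt | rfl
  · have hlt' : -g + b < c.order :=
      neg_add_lt_iff_lt_add.2 ((neg_add_lt_iff_lt_add.1 hlt).trans_eq (add_comm _ _))
    rw [if_neg hlt.ne, HahnSeries.coeff_eq_zero_of_lt_order hlt', zero_mul]
  · simp

theorem linDep_of_card_lt [CommRing L] [Nontrivial L] {m n : ℕ} (hnm : n < m)
    (v : Fin m → Fin n → ELT F L) : LinDep v := by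
  have hdep : ¬ LinearIndependent (HahnSeries F L) fun i j => monomial (v i j) := fun h =>
    hnm.not_ge (by simpa using h.fintype_card_le_finrank)
  obtain ⟨c, hc, i, hi⟩ := Fintype.not_linearIndependent_iff.mp hdep
  refine ⟨fun i => ELTrop (c i), fun i => tangibleOrBot_ELTrop (c i), ⟨i, ELTrop_ne_bot hi⟩,
    fun j => s_fsum_eq_zero_of_coeff_eq _ (fun i => c i * monomial (v i j))
      (fun i => coeff_ELTrop_mul_monomial (c i) (v i j)) ?_⟩
  simpa using congrFun hc j

end Tropicalization

end ELT

theorem stmt12_general {𝔽 : Type} [Field 𝔽] {n : ℕ}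
    (v : Fin (n + 1) → Fin n → ELT ℝ 𝔽) :
    ELT.LinDep v :=
  ELT.linDep_of_card_lt n.lt_succ_self v

/-- Any `n + 1` vectors in `𝓡̄ⁿ` are linearly dependent. -/
theorem stmt12 {𝔽 : Type} [Field 𝔽] [IsAlgClosed 𝔽] {n : ℕ}
    (v : Fin (n + 1) → Fin n → ELT ℝ 𝔽) :
    ELT.LinDep v :=
  stmt12_general v
end
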